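/- Let p ≥ 1 and d be natural numbers, let q be a real number with q > φ and ∑_{k=0}^∞ f_{pk}/q^{pk} ≥ 2, and set z = q e^{2πi d/p}. Then R_∞(z) := { ∑_{k=0}^∞ u_k f_k / z^k : u ∈ {0,1}^ℕ } equals the Minkowski sum ∑_{h=0}^{p-1} z^{-h} · [0, S(q,h,p)], i.e. R_∞(z) = { ∑_{h=0}^{p-1} z^{-h} t_h : t_h ∈ ℝ, 0 ≤ t_h ≤ S(q,h,p) for each h }. -/

import Mathlib

/-- The Fibonacci-like sequence with `f 0 = f 1 = 1`. -/
def fib1 : ℕ → ℕ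
  | 0 => 1
  | 1 => 1
  | n + 2 => fib1 (n + 1) + fib1 n

/-- The golden ratio. -/
noncomputable def phi : ℝ := (1 + Real.sqrt 5) / 2

/-- `Sp q h p = ∑_{k=0}^∞ f_{pk+h} / q^{pk}`. -/
noncomputable def Sp (q : ℝ) (h p : ℕ) : ℝ := ∑' k : ℕ, (fib1 (p * k + h) : ℝ) / q ^ (p * k)

lemma fib1_eq_fib : ∀ n, fib1 n = Nat.fib (n + 1)
  | 0 => rfl
  | 1 => rfl
  | n + 2 => by
    show fib1 (n + 1) + fib1 n = Nat.fib (n + 2 + 1)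
    rw [fib1_eq_fib (n + 1), fib1_eq_fib n]
    have h1 : Nat.fib (n + 1 + 2) = Nat.fib (n + 1) + Nat.fib (n + 1 + 1) := Nat.fib_add_two
    calc Nat.fib (n + 1 + 1) + Nat.fib (n + 1)
        = Nat.fib (n + 1) + Nat.fib (n + 1 + 1) := Nat.add_comm _ _
      _ = Nat.fib (n + 1 + 2) := h1.symm
      _ = Nat.fib (n + 2 + 1) := by congr 1

lemma fib1_mul_le (m n : ℕ) : fib1 m * fib1 n ≤ fib1 (m + n) := by
  rw [fib1_eq_fib, fib1_eq_fib, fib1_eq_fib]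
  calc Nat.fib (m + 1) * Nat.fib (n + 1)
      ≤ Nat.fib m * Nat.fib n + Nat.fib (m + 1) * Nat.fib (n + 1) := Nat.le_add_left _ _
    _ = Nat.fib (m + n + 1) := (Nat.fib_add m n).symm

lemma sqrt5_gt_two : (2 : ℝ) < Real.sqrt 5 := by
  nlinarith [Real.sq_sqrt (show (0:ℝ) ≤ 5 by norm_num), Real.sqrt_nonneg 5]

lemma one_lt_phi : 1 < phi := by
  have := sqrt5_gt_two; unfold phi; linarith

lemma phi_pos : 0 < phi := lt_trans one_pos one_lt_phi

lemma phi_sq : phi ^ 2 = phi + 1 := by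
  unfold phi
  have h : Real.sqrt 5 ^ 2 = 5 := Real.sq_sqrt (by norm_num)
  nlinarith [h]

lemma fib1_le_phi_pow : ∀ n, (fib1 n : ℝ) ≤ phi ^ n
  | 0 => by simp [fib1]
  | 1 => by simpa [fib1] using one_lt_phi.le
  | n + 2 => by
    have h1 := fib1_le_phi_pow (n + 1)
    have h2 := fib1_le_phi_pow n
    have e : phi ^ (n + 2) = phi ^ (n + 1) + phi ^ n := by
      have h := phi_sq
      calc phi ^ (n + 2) = phi ^ n * phi ^ 2 := by ring
        _ = phi ^ n * (phi + 1) := by rw [h]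
        _ = phi ^ (n + 1) + phi ^ n := by ring
    show ((fib1 (n + 1) + fib1 n : ℕ) : ℝ) ≤ phi ^ (n + 2)
    push_cast
    linarith

lemma summable_A (p h : ℕ) (hp : 1 ≤ p) (q : ℝ) (hq : phi < q) :
    Summable (fun m : ℕ => (fib1 (p * m + h) : ℝ) / q ^ (p * m)) := by
  have hq0 : 0 < q := lt_trans phi_pos hq
  have hr0 : 0 ≤ (phi / q) ^ p := pow_nonneg (div_nonneg phi_pos.le hq0.le) p
  have hr1 : (phi / q) ^ p < 1 := by
    apply pow_lt_one₀ (div_nonneg phi_pos.le hq0.le) _ (by omega)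
    rw [div_lt_one hq0]; exact hq
  have hgeom : Summable (fun m : ℕ => phi ^ h * ((phi / q) ^ p) ^ m) :=
    (summable_geometric_of_lt_one hr0 hr1).mul_left _
  apply Summable.of_nonneg_of_le (fun m => div_nonneg (Nat.cast_nonneg _) (pow_pos hq0 _).le)
    (fun m => ?_) hgeom
  have e : phi ^ h * ((phi / q) ^ p) ^ m = phi ^ (p * m + h) / q ^ (p * m) := by
    rw [← pow_mul, div_pow, pow_add]; ring
  rw [e]
  gcongr
  exact fib1_le_phi_pow _

lemma cond_A (p h : ℕ) (hp : 1 ≤ p) (q : ℝ) (hq : phi < q) (hS : 2 ≤ Sp q 0 p) (k : ℕ) :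
    (fib1 (p * k + h) : ℝ) / q ^ (p * k)
      ≤ ∑' j : ℕ, (fib1 (p * (j + (k + 1)) + h) : ℝ) / q ^ (p * (j + (k + 1))) := by
  have hq1 : 1 < q := lt_trans one_lt_phi hq
  have hq0 : 0 < q := lt_trans zero_lt_one hq1
  set A := fun m : ℕ => (fib1 (p * m + h) : ℝ) / q ^ (p * m) with hA
  set B := fun m : ℕ => (fib1 (p * m) : ℝ) / q ^ (p * m) with hB
  have hAk0 : 0 ≤ A k := div_nonneg (Nat.cast_nonneg _) (pow_pos hq0 _).le
  have hAsum : Summable A := summable_A p h hp q hq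
  have hBsum : Summable B := by
    have := summable_A p 0 hp q hq
    simpa using this
  have hstep : ∀ j : ℕ, A k * B (j + 1) ≤ A (j + (k + 1)) := by
    intro j
    have hfib : (fib1 (p * k + h) * fib1 (p * (j + 1)) : ℕ) ≤ fib1 (p * (j + (k + 1)) + h) := by
      have h1 := fib1_mul_le (p * k + h) (p * (j + 1))
      have e : p * k + h + p * (j + 1) = p * (j + (k + 1)) + h := by ring
      rwa [e] at h1
    have e1 : q ^ (p * (j + (k + 1))) = q ^ (p * k) * q ^ (p * (j + 1)) := by
      rw [← pow_add]
      congr 1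
      ring
    have hd0 : 0 < q ^ (p * k) * q ^ (p * (j + 1)) := by positivity
    calc A k * B (j + 1)
        = (fib1 (p * k + h) * fib1 (p * (j + 1)) : ℝ) / (q ^ (p * k) * q ^ (p * (j + 1))) := by
          simp only [hA, hB]
          field_simp
      _ ≤ (fib1 (p * (j + (k + 1)) + h) : ℝ) / (q ^ (p * k) * q ^ (p * (j + 1))) := by
          gcongr
          exact_mod_cast hfib
      _ = A (j + (k + 1)) := by simp only [hA]; rw [e1]
  have hsum1 : Summable (fun j : ℕ => A k * B (j + 1)) :=
    ((summable_nat_add_iff 1).2 hBsum).mul_left _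
  have hsum2 : Summable (fun j : ℕ => A (j + (k + 1))) :=
    (summable_nat_add_iff (k + 1)).2 hAsum
  have h2 : A k * ∑' j : ℕ, B (j + 1) ≤ ∑' j : ℕ, A (j + (k + 1)) := by
    rw [← tsum_mul_left]
    exact Summable.tsum_le_tsum hstep hsum1 hsum2
  have hSpB : Sp q 0 p = ∑' m : ℕ, B m := by
    simp [Sp, hB]
  have hB0 : B 0 = 1 := by simp [hB, fib1]
  have hB1 : 1 ≤ ∑' j : ℕ, B (j + 1) := by
    have hsplit : ∑' m : ℕ, B m = B 0 + ∑' j : ℕ, B (j + 1) := Summable.tsum_eq_zero_add hBsum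
    rw [hSpB, hsplit, hB0] at hS
    linarith
  calc A k = A k * 1 := by ring
    _ ≤ A k * ∑' j : ℕ, B (j + 1) := mul_le_mul_of_nonneg_left hB1 hAk0
    _ ≤ ∑' j : ℕ, A (j + (k + 1)) := h2

noncomputable def greedy (a : ℕ → ℝ) (x : ℝ) : ℕ → ℝ
  | 0 => x
  | k + 1 => if a k ≤ greedy a x k then greedy a x k - a k else greedy a x k

lemma kakeya {a : ℕ → ℝ} (hpos : ∀ k, 0 ≤ a k) (hsum : Summable a)
    (hcond : ∀ k, a k ≤ ∑' j : ℕ, a (j + (k + 1))) {x : ℝ}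
    (hx0 : 0 ≤ x) (hx1 : x ≤ ∑' k, a k) :
    ∃ w : ℕ → ℝ, (∀ m, w m = 0 ∨ w m = 1) ∧ HasSum (fun m => w m * a m) x := by
  set r := greedy a x with hr
  set w : ℕ → ℝ := fun k => if a k ≤ r k then 1 else 0 with hw
  have htail : ∀ k, ∑' j : ℕ, a (j + k) = a k + ∑' j : ℕ, a (j + (k + 1)) := by
    intro k
    have hsk : Summable (fun j => a (j + k)) := (summable_nat_add_iff k).2 hsum
    rw [Summable.tsum_eq_zero_add hsk]
    simp only [zero_add]
    congr 1
    exact tsum_congr fun j => by congr 1; omega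
  have hinv : ∀ k, 0 ≤ r k ∧ r k ≤ ∑' j : ℕ, a (j + k) := by
    intro k
    induction k with
    | zero =>
      refine ⟨hx0, ?_⟩
      simpa [hr, greedy] using hx1
    | succ k ih =>
      rcases ih with ⟨ih0, ih1⟩
      by_cases hc : a k ≤ r k
      · have hrk : r (k + 1) = r k - a k := by rw [hr] at hc ⊢; simp [greedy, hc]
        have := htail k
        constructor
        · rw [hrk]; linarith
        · rw [hrk]; linarith
      · have hrk : r (k + 1) = r k := by rw [hr] at hc ⊢; simp [greedy, hc]
        have hlt : r k < a k := lt_of_not_ge hc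
        have := hcond k
        constructor
        · rw [hrk]; exact ih0
        · rw [hrk]; linarith
  have hps : ∀ k, ∑ j ∈ Finset.range k, w j * a j = x - r k := by
    intro k
    induction k with
    | zero => simp [hr, greedy]
    | succ k ih =>
      rw [Finset.sum_range_succ, ih]
      by_cases hc : a k ≤ r k
      · have hrk : r (k + 1) = r k - a k := by rw [hr] at hc ⊢; simp [greedy, hc]
        simp only [hw, if_pos hc]
        rw [hrk]; ring
      · have hrk : r (k + 1) = r k := by rw [hr] at hc ⊢; simp [greedy, hc]
        simp only [hw, if_neg hc]
        rw [hrk]; ring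
  have hr0 : Filter.Tendsto r Filter.atTop (nhds 0) := by
    apply squeeze_zero (fun k => (hinv k).1) (fun k => (hinv k).2)
    exact tendsto_sum_nat_add a
  have hw01 : ∀ m, w m = 0 ∨ w m = 1 := by
    intro m
    by_cases hc : a m ≤ r m
    · right; simp [hw, hc]
    · left; simp [hw, hc]
  have hsw : Summable (fun m => w m * a m) := by
    apply Summable.of_nonneg_of_le (fun m => ?_) (fun m => ?_) hsum
    · rcases hw01 m with h0 | h1
      · rw [h0]; simp
      · rw [h1]; simpa using hpos m
    · rcases hw01 m with h0 | h1
      · rw [h0]; simpa using hpos m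
      · rw [h1]; simp
  have h1 := hsw.hasSum
  have h2 := h1.tendsto_sum_nat
  have h3 : Filter.Tendsto (fun k => ∑ j ∈ Finset.range k, w j * a j) Filter.atTop (nhds x) := by
    have : (fun k => ∑ j ∈ Finset.range k, w j * a j) = fun k => x - r k := by
      funext k; exact hps k
    rw [this]
    have := Filter.Tendsto.const_sub x hr0
    simpa using this
  have hux := tendsto_nhds_unique h2 h3
  refine ⟨w, hw01, ?_⟩
  rwa [hux] at h1

lemma keyC (p h : ℕ) (q : ℝ) (hq0 : 0 < q) (z : ℂ) (hz0 : z ≠ 0) (hzp : z ^ p = (q : ℂ) ^ p)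
    (v : ℕ → ℝ) (T : ℝ)
    (hv : HasSum (fun m => v m * ((fib1 (p * m + h) : ℝ) / q ^ (p * m))) T) :
    HasSum (fun m => ((v m : ℂ)) * (fib1 (p * m + h) : ℂ) / z ^ (p * m + h))
      ((z⁻¹) ^ h * (T : ℂ)) := by
  have h1 : HasSum (fun m => ((v m * ((fib1 (p * m + h) : ℝ) / q ^ (p * m)) : ℝ) : ℂ)) (T : ℂ) :=
    Complex.hasSum_ofReal.2 hv
  have he : (fun m => ((v m : ℂ)) * (fib1 (p * m + h) : ℂ) / z ^ (p * m + h))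
      = fun m => (z⁻¹) ^ h * ((v m * ((fib1 (p * m + h) : ℝ) / q ^ (p * m)) : ℝ) : ℂ) := by
    funext m
    have hzz : z ^ (p * m + h) = (q : ℂ) ^ (p * m) * z ^ h := by
      rw [pow_add, pow_mul, hzp, ← pow_mul]
    have hqC : (q : ℂ) ≠ 0 := by exact_mod_cast hq0.ne'
    have hq2 : (q : ℂ) ^ (p * m) ≠ 0 := pow_ne_zero _ hqC
    have hz1 : z ^ h ≠ 0 := pow_ne_zero _ hz0
    rw [hzz]
    push_cast
    field_simp
    simp only [one_div, inv_pow]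
    rw [mul_assoc _ (z ^ h), mul_inv_cancel₀ hz1, mul_one]
    try ring
    try tauto
  rw [he]
  exact h1.mul_left _

lemma combine (p : ℕ) (hp : 0 < p) (g : ℕ → ℂ) (s : ℕ → ℂ)
    (hs : ∀ h, h < p → HasSum (fun m => g (p * m + h)) (s h)) :
    HasSum g (∑ h ∈ Finset.range p, s h) := by
  have hG : ∀ h ∈ Finset.range p, HasSum (fun k => if k % p = h then g k else 0) (s h) := by
    intro h hh
    rw [Finset.mem_range] at hh
    have inj : Function.Injective (fun m : ℕ => p * m + h) := by
      intro m1 m2 e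
      simp only at e
      have : p * m1 = p * m2 := by omega
      exact Nat.eq_of_mul_eq_mul_left hp this
    have hvan : ∀ k ∉ Set.range (fun m : ℕ => p * m + h),
        (if k % p = h then g k else 0) = 0 := by
      intro k hk
      have : k % p ≠ h := by
        intro e
        apply hk
        refine ⟨k / p, ?_⟩
        simp only
        rw [← e]
        exact Nat.div_add_mod k p
      simp [this]
    rw [← Function.Injective.hasSum_iff inj hvan]
    have hmods : ∀ m : ℕ, (p * m + h) % p = h := by
      intro m
      rw [Nat.mul_add_mod, Nat.mod_eq_of_lt hh]
    have hcomp : ((fun k => if k % p = h then g k else 0) ∘ fun m : ℕ => p * m + h)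
        = fun m => g (p * m + h) := by
      funext m
      simp [Function.comp, hmods m]
    rw [hcomp]
    exact hs h hh
  have he : g = fun k => ∑ h ∈ Finset.range p, if k % p = h then g k else 0 := by
    funext k
    rw [Finset.sum_ite_eq]
    simp [Nat.mod_lt k hp]
  rw [he]
  exact hasSum_sum hG

theorem stmt7 (p d : ℕ) (hp : 1 ≤ p) (q : ℝ) (hq : phi < q)
    (hS : 2 ≤ Sp q 0 p) :
    let z : ℂ := (q : ℂ) * Complex.exp (2 * Real.pi * Complex.I * d / p)
    {x : ℂ | ∃ u : ℕ → ℂ, (∀ n, u n = 0 ∨ u n = 1) ∧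
        HasSum (fun k => u k * (fib1 k : ℂ) / z ^ k) x} =
      {x : ℂ | ∃ t : ℕ → ℝ, (∀ h, h < p → 0 ≤ t h ∧ t h ≤ Sp q h p) ∧
        x = ∑ h ∈ Finset.range p, (z⁻¹) ^ h * (t h : ℂ)} := by
  intro z
  have hp0 : 0 < p := hp
  have hq0 : 0 < q := lt_trans phi_pos hq
  have hpC : (p : ℂ) ≠ 0 := by exact_mod_cast hp0.ne'
  have hexp1 : Complex.exp (2 * Real.pi * Complex.I * d / p) ^ p = 1 := by
    rw [← Complex.exp_nat_mul]
    have : (p : ℂ) * (2 * Real.pi * Complex.I * d / p) = (d : ℂ) * (2 * Real.pi * Complex.I) := by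
      field_simp
    rw [this, Complex.exp_nat_mul, Complex.exp_two_pi_mul_I, one_pow]
  have hzp : z ^ p = (q : ℂ) ^ p := by
    show ((q : ℂ) * Complex.exp (2 * Real.pi * Complex.I * d / p)) ^ p = _
    rw [mul_pow, hexp1, mul_one]
  have hz0 : z ≠ 0 := by
    show (q : ℂ) * Complex.exp (2 * Real.pi * Complex.I * d / p) ≠ 0
    apply mul_ne_zero
    · exact_mod_cast hq0.ne'
    · exact Complex.exp_ne_zero _
  have hApos : ∀ h m : ℕ, (0 : ℝ) ≤ (fib1 (p * m + h) : ℝ) / q ^ (p * m) := fun h m =>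
    div_nonneg (Nat.cast_nonneg _) (pow_pos hq0 _).le
  ext x
  simp only [Set.mem_setOf_eq]
  constructor
  · rintro ⟨u, hu01, hsum⟩
    set v : ℕ → ℕ → ℝ := fun h m => if u (p * m + h) = 1 then 1 else 0 with hv
    have hvu : ∀ h m, ((v h m : ℝ) : ℂ) = u (p * m + h) := by
      intro h m
      rcases hu01 (p * m + h) with h0 | h1
      · have : u (p * m + h) ≠ 1 := by rw [h0]; norm_num
        simp [hv, this, h0]
      · simp [hv, h1]
    have hv01 : ∀ h m, 0 ≤ v h m ∧ v h m ≤ 1 := by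
      intro h m
      by_cases hc : u (p * m + h) = 1 <;> simp [hv, hc]
    have hsummv : ∀ h : ℕ, Summable (fun m => v h m * ((fib1 (p * m + h) : ℝ) / q ^ (p * m))) := by
      intro h
      apply Summable.of_nonneg_of_le (fun m => mul_nonneg (hv01 h m).1 (hApos h m))
        (fun m => ?_) (summable_A p h hp q hq)
      exact mul_le_of_le_one_left (hApos h m) (hv01 h m).2
    set t : ℕ → ℝ := fun h => ∑' m : ℕ, v h m * ((fib1 (p * m + h) : ℝ) / q ^ (p * m)) with ht
    have htb : ∀ h, h < p → 0 ≤ t h ∧ t h ≤ Sp q h p := by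
      intro h _
      constructor
      · exact tsum_nonneg fun m => mul_nonneg (hv01 h m).1 (hApos h m)
      · exact Summable.tsum_le_tsum (fun m => mul_le_of_le_one_left (hApos h m) (hv01 h m).2)
          (hsummv h) (summable_A p h hp q hq)
    have hfib : ∀ h, h < p → HasSum
        (fun m => u (p * m + h) * (fib1 (p * m + h) : ℂ) / z ^ (p * m + h))
        ((z⁻¹) ^ h * ((t h : ℝ) : ℂ)) := by
      intro h _
      have := keyC p h q hq0 z hz0 hzp (v h) (t h) (hsummv h).hasSum
      refine this.congr_fun fun m => ?_
      rw [hvu h m]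
    have hcomb := combine p hp0 (fun k => u k * (fib1 k : ℂ) / z ^ k)
      (fun h => (z⁻¹) ^ h * ((t h : ℝ) : ℂ)) (fun h hh => hfib h hh)
    refine ⟨t, htb, ?_⟩
    exact hsum.unique hcomb
  · rintro ⟨t, htb, rfl⟩
    have hex : ∀ h : ℕ, ∃ w : ℕ → ℝ, (∀ m, w m = 0 ∨ w m = 1) ∧
        (h < p → HasSum (fun m => w m * ((fib1 (p * m + h) : ℝ) / q ^ (p * m))) (t h)) := by
      intro h
      by_cases hh : h < p
      · obtain ⟨w, hw01, hwsum⟩ := kakeya (hApos h) (summable_A p h hp q hq)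
          (fun k => cond_A p h hp q hq hS k) (htb h hh).1 (htb h hh).2
        exact ⟨w, hw01, fun _ => hwsum⟩
      · exact ⟨fun _ => 0, fun m => Or.inl rfl, fun hc => absurd hc hh⟩
    choose W hW01 hWsum using hex
    refine ⟨fun k => ((W (k % p) (k / p) : ℝ) : ℂ), fun n => ?_, ?_⟩
    · rcases hW01 (n % p) (n / p) with h0 | h1
      · left; show ((W (n % p) (n / p) : ℝ) : ℂ) = 0; rw [h0]; norm_num
      · right; show ((W (n % p) (n / p) : ℝ) : ℂ) = 1; rw [h1]; norm_num
    · apply combine p hp0 _ (fun h => (z⁻¹) ^ h * ((t h : ℝ) : ℂ))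
      intro h hh
      have hmod : ∀ m : ℕ, (p * m + h) % p = h := fun m => by
        rw [Nat.mul_add_mod, Nat.mod_eq_of_lt hh]
      have hdiv : ∀ m : ℕ, (p * m + h) / p = m := fun m => by
        rw [Nat.mul_add_div hp0, Nat.div_eq_of_lt hh, add_zero]
      have := keyC p h q hq0 z hz0 hzp (W h) (t h) (hWsum h hh)
      refine this.congr_fun fun m => ?_
      simp only [hmod m, hdiv m]
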